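/- arXiv:1309.7598 — 3 statements merged into one kernel-verified Lean document; each statement's English description precedes it below -/
import Mathlib

section
/- Let μ be the probability measure on ℝ whose cumulative distribution function is F(t) = exp(−exp(−(t + c))), where c is the Euler–Mascheroni constant. Then μ has finite first moment and its expectation is 0, i.e. ∫ t dμ(t) = 0. -/
/-!
If `X` has the rate-one exponential law, then `m - log X ≤ t` iff `X ≥ exp (-(t - m))`, an event
of probability `exp (-exp (-(t - m)))`; so a measure with the Gumbel distribution function is the
law of `m - log X`, here with `m = -γ`. Its mean is `m - 𝔼[log X] = m - Γ'(1) = m + γ`, since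
`Γ'(1) = ∫ log t · e^{-t} dt` is `-γ`.
-/

open MeasureTheory Real

open Set Filter Topology Asymptotics ProbabilityTheory

local notation "γ" => eulerMascheroniConstant

instance nullSingletonClass_expMeasure (r : ℝ) : NullSingletonClass (expMeasure r) := by
  unfold expMeasure gammaMeasure
  infer_instance

lemma expMeasure_Iic_zero {r : ℝ} (hr : 0 < r) : expMeasure r (Iic 0) = 0 := by
  have := isProbabilityMeasure_expMeasure hr
  rw [← ofReal_cdf, cdf_expMeasure_eq hr, if_pos le_rfl]
  simp

lemma expMeasure_Ici {r a : ℝ} (hr : 0 < r) (ha : 0 ≤ a) :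
    expMeasure r (Ici a) = ENNReal.ofReal (exp (-(r * a))) := by
  have := isProbabilityMeasure_expMeasure hr
  have hle : exp (-(r * a)) ≤ 1 := exp_le_one_iff.mpr (by nlinarith)
  rw [← compl_Iio, prob_compl_eq_one_sub measurableSet_Iio, measure_congr Iio_ae_eq_Iic,
    ← ofReal_cdf, cdf_expMeasure_eq hr, if_pos ha, ← ENNReal.ofReal_one,
    ← ENNReal.ofReal_sub _ (sub_nonneg.mpr hle), sub_sub_cancel]

lemma expMeasure_eq_withDensity (r : ℝ) :
    expMeasure r = (volume.restrict (Ici 0)).withDensity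
      fun x => ENNReal.ofReal (r * exp (-(r * x))) := by
  change volume.withDensity (exponentialPDF r) = _
  rw [← withDensity_indicator measurableSet_Ici]
  congr 1 with x
  by_cases hx : 0 ≤ x <;> simp [exponentialPDF_eq, hx]

instance isProbabilityMeasure_expMeasure_one : IsProbabilityMeasure (expMeasure 1) :=
  isProbabilityMeasure_expMeasure one_pos

section Integration

variable {E : Type*} [NormedAddCommGroup E] [NormedSpace ℝ E]

lemma integrable_expMeasure_iff {r : ℝ} (hr : 0 ≤ r) {f : ℝ → E} :
    Integrable f (expMeasure r) ↔
      IntegrableOn (fun x => (r * exp (-(r * x))) • f x) (Ioi 0) := by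
  rw [expMeasure_eq_withDensity, integrable_withDensity_iff_integrable_smul' (by fun_prop)
    (by simp), ← integrableOn_Ici_iff_integrableOn_Ioi, IntegrableOn]
  simp_rw [ENNReal.toReal_ofReal (by positivity : 0 ≤ r * exp _)]

lemma integral_expMeasure {r : ℝ} (hr : 0 ≤ r) (f : ℝ → E) :
    ∫ x, f x ∂expMeasure r = ∫ x in Ioi 0, (r * exp (-(r * x))) • f x := by
  rw [expMeasure_eq_withDensity, integral_withDensity_eq_integral_toReal_smul (by fun_prop)
    (by simp), ← integral_Ici_eq_integral_Ioi]
  simp_rw [ENNReal.toReal_ofReal (by positivity : 0 ≤ r * exp _)]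

end Integration

lemma integrableOn_log_mul_exp_neg_Ioi :
    IntegrableOn (fun t : ℝ => log t * exp (-t)) (Ioi 0) := by
  have hexp_top : (fun t : ℝ => exp (-t)) =O[atTop] (· ^ (-2 : ℝ)) := by
    simpa only [neg_one_mul] using (isLittleO_exp_neg_mul_rpow_atTop one_pos _).isBigO
  have hexp_bot : (fun t : ℝ => exp (-t)) =O[𝓝[>] 0] (· ^ (-0 : ℝ)) := by
    simp_rw [neg_zero, rpow_zero]
    have hlim : Tendsto (fun t : ℝ => exp (-t)) (𝓝[>] 0) (𝓝 1) :=
      ((continuous_exp.comp continuous_neg).tendsto' 0 1 (by simp)).mono_left nhdsWithin_le_nhds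
    exact isBigO_const_of_tendsto hlim one_ne_zero
  have hcont : ContinuousOn (fun t : ℝ => log t * exp (-t)) (Ioi 0) :=
    (continuousOn_log.mono fun _ ht => ne_of_gt ht).mul (by fun_prop)
  -- `log t * exp (-t)` is `O(t ^ (-3/2))` at `∞` and `O(t ^ (-1/2))` at `0`, and `1/2 < 1 < 3/2`.
  simpa using mellin_convergent_of_isBigO_scalar (s := 1)
    (hcont.locallyIntegrableOn measurableSet_Ioi)
    (isBigO_rpow_top_log_smul (b := 3 / 2) (by norm_num) hexp_top) (by norm_num)
    (isBigO_rpow_zero_log_smul (b := 1 / 2) (by norm_num) hexp_bot) (by norm_num)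

lemma integral_log_mul_exp_neg_Ioi : ∫ t in Ioi 0, log t * exp (-t) = -γ := by
  have hGamma : HasDerivAt Complex.GammaIntegral (-γ : ℂ) 1 := by
    refine Complex.hasDerivAt_Gamma_one.congr_of_eventuallyEq ?_
    filter_upwards [(Complex.continuous_re.isOpen_preimage _ isOpen_Ioi).mem_nhds
      (by simp : (1 : ℂ) ∈ Complex.re ⁻¹' Ioi 0)] with s hs
    exact (Complex.Gamma_eq_integral hs).symm
  have := (Complex.hasDerivAt_GammaIntegral (s := 1) (by simp)).unique hGamma
  simp only [sub_self, Complex.cpow_zero, one_mul] at this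
  exact_mod_cast this

lemma integrable_log_expMeasure_one : Integrable log (expMeasure 1) := by
  rw [integrable_expMeasure_iff zero_le_one]
  simpa only [one_mul, mul_one, smul_eq_mul, mul_comm] using integrableOn_log_mul_exp_neg_Ioi

lemma integral_log_expMeasure_one : ∫ x, log x ∂expMeasure 1 = -γ := by
  rw [integral_expMeasure zero_le_one]
  simpa only [one_mul, mul_one, smul_eq_mul, mul_comm] using integral_log_mul_exp_neg_Ioi

/-- The Gumbel distribution with location `m` and unit scale, realised as the law of `m - log X`
for `X` exponentially distributed with rate `1`. -/
noncomputable def gumbelMeasure (m : ℝ) : Measure ℝ :=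
  (expMeasure 1).map fun x => m - log x

instance isProbabilityMeasure_gumbelMeasure (m : ℝ) : IsProbabilityMeasure (gumbelMeasure m) :=
  Measure.isProbabilityMeasure_map (by fun_prop)

lemma gumbelMeasure_Iic (m t : ℝ) :
    gumbelMeasure m (Iic t) = ENNReal.ofReal (exp (-exp (-(t - m)))) := by
  have hpreimage : (fun x => m - log x) ⁻¹' Iic t ∩ Ioi 0 = Ici (exp (-(t - m))) := by
    ext x
    simp only [mem_inter_iff, mem_preimage, mem_Iic, mem_Ioi, mem_Ici]
    constructor
    · rintro ⟨hx, hpos⟩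
      rw [← le_log_iff_exp_le hpos]
      linarith
    · intro hx
      have hpos := (exp_pos _).trans_le hx
      rw [← le_log_iff_exp_le hpos] at hx
      exact ⟨by linarith, hpos⟩
  rw [gumbelMeasure, Measure.map_apply (by fun_prop) measurableSet_Iic,
    ← measure_inter_conull (t := Ioi 0) (by rw [compl_Ioi, expMeasure_Iic_zero one_pos]),
    hpreimage, expMeasure_Ici one_pos (exp_pos _).le, one_mul]

lemma integrable_id_gumbelMeasure (m : ℝ) : Integrable (fun t => t) (gumbelMeasure m) := by
  rw [gumbelMeasure, integrable_map_measure (g := fun t => t) (by fun_prop) (by fun_prop)]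
  exact (integrable_const m).sub integrable_log_expMeasure_one

lemma integral_id_gumbelMeasure (m : ℝ) :
    ∫ t, t ∂gumbelMeasure m = m + γ := by
  rw [gumbelMeasure, integral_map (f := fun t => t) (by fun_prop) (by fun_prop),
    integral_sub (integrable_const m) integrable_log_expMeasure_one, integral_log_expMeasure_one]
  simp

theorem gumbel_mean_zero_general (μ : Measure ℝ)
    (hcdf : ∀ t : ℝ,
      μ (Set.Iic t) = ENNReal.ofReal (exp (-exp (-(t + eulerMascheroniConstant))))) :
    Integrable (fun t : ℝ => t) μ ∧ ∫ t : ℝ, t ∂μ = 0 := by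
  obtain rfl : μ = gumbelMeasure (-γ) :=
    (Measure.ext_of_Iic _ _ fun t => by rw [gumbelMeasure_Iic, hcdf, sub_neg_eq_add]).symm
  exact ⟨integrable_id_gumbelMeasure _, by rw [integral_id_gumbelMeasure, neg_add_cancel]⟩

/-- If `μ` is the probability measure on `ℝ` whose cumulative distribution
function is `F t = exp (-exp (-(t + c)))`, with `c` the Euler–Mascheroni constant (i.e. the
zero-mean Gumbel distribution), then `μ` has finite first moment and its expectation is `0`. -/
theorem gumbel_mean_zero (μ : Measure ℝ) [IsProbabilityMeasure μ]
    (hcdf : ∀ t : ℝ,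
      μ (Set.Iic t) = ENNReal.ofReal (exp (-exp (-(t + eulerMascheroniConstant))))) :
    Integrable (fun t : ℝ => t) μ ∧ ∫ t : ℝ, t ∂μ = 0 :=
  gumbel_mean_zero_general μ hcdf
end

section
/- Let X be a finite nonempty set, θ : X → ℝ, and Z = Σ_{x∈X} exp(θ(x)). Let {γ(x)}_{x∈X} be independent real random variables, each distributed according to the zero-mean Gumbel distribution. Then the random variable M = max_{x∈X} (θ(x) + γ(x)) is Gumbel distributed with location log Z: for every t ∈ ℝ, P[M ≤ t] = exp(−exp(−(t − log Z + c))), where c is the Euler–Mascheroni constant. -/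
/-!
The event `max_x (θ x + γ x) ≤ t` is the intersection of the independent events
`γ x ≤ t - θ x`, so its probability is `∏ x, F (t - θ x)` with `F` the Gumbel cdf. Since
`exp (-(t - μ + c)) = exp μ * exp (-(t + c))`, shifting a Gumbel cdf by `μ` multiplies its
double exponent by `exp μ`; the product therefore is a Gumbel cdf with double exponent
scaled by `Z = ∑ x, exp (θ x)`, i.e. with location `log Z`.
-/

open MeasureTheory Real ProbabilityTheory

theorem ProbabilityTheory.iIndepFun.measure_iSup_le {ι Ω α : Type*} [Fintype ι] [Nonempty ι]
    [MeasurableSpace Ω] {μ : Measure Ω} [ConditionallyCompleteLinearOrder α]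
    [TopologicalSpace α] [OrderClosedTopology α] [MeasurableSpace α] [OpensMeasurableSpace α]
    {f : ι → Ω → α} (hf : iIndepFun f μ) (t : α) :
    μ {ω | ⨆ i, f i ω ≤ t} = ∏ i, μ {ω | f i ω ≤ t} := by
  have hiInter : {ω | ⨆ i, f i ω ≤ t} = ⋂ i, f i ⁻¹' Set.Iic t := by
    ext ω
    simp [ciSup_le_iff (Set.finite_range _).bddAbove]
  rw [hiInter, hf.meas_iInter fun i ↦ ⟨Set.Iic t, measurableSet_Iic, rfl⟩]
  rfl

noncomputable def gumbelCDF (μ t : ℝ) : ℝ :=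
  exp (-exp (-(t - μ + eulerMascheroniConstant)))

lemma gumbelCDF_pos (μ t : ℝ) : 0 < gumbelCDF μ t := exp_pos _

lemma exp_neg_sub_add (t μ c : ℝ) : exp (-(t - μ + c)) = exp μ * exp (-(t + c)) := by
  rw [← exp_add]
  ring_nf

lemma prod_gumbelCDF {ι : Type*} {s : Finset ι} (hs : s.Nonempty) (μ : ι → ℝ) (t : ℝ) :
    ∏ i ∈ s, gumbelCDF (μ i) t = gumbelCDF (log (∑ i ∈ s, exp (μ i))) t := by
  have hZ : 0 < ∑ i ∈ s, exp (μ i) := Finset.sum_pos (fun i _ ↦ exp_pos _) hs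
  simp only [gumbelCDF, ← exp_sum, exp_neg_sub_add, exp_log hZ, Finset.sum_mul,
    Finset.sum_neg_distrib]

theorem perturbed_max_gumbel_log_partition_general
    {X : Type*} [Fintype X] [Nonempty X] (θ : X → ℝ)
    {Ω : Type*} [MeasurableSpace Ω] (P : Measure Ω)
    (γ : X → Ω → ℝ)
    (hindep : iIndepFun γ P)
    (hcdf : ∀ x t, P {ω | γ x ω ≤ t} =
      ENNReal.ofReal (exp (-exp (-(t + eulerMascheroniConstant))))) :
    ∀ t : ℝ,
      P {ω | (⨆ x : X, (θ x + γ x ω)) ≤ t} =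
        ENNReal.ofReal
          (exp (-exp (-(t - Real.log (∑ x : X, exp (θ x)) + eulerMascheroniConstant)))) := by
  intro t
  have hshift : iIndepFun (fun x ↦ (θ x + ·) ∘ γ x) P :=
    hindep.comp _ fun x ↦ measurable_const_add (θ x)
  have hcdf_shift : ∀ x, P {ω | θ x + γ x ω ≤ t} = ENNReal.ofReal (gumbelCDF (θ x) t) := by
    intro x
    simp_rw [← le_sub_iff_add_le']
    exact hcdf x (t - θ x)
  calc P {ω | (⨆ x : X, (θ x + γ x ω)) ≤ t}
      = ∏ x, ENNReal.ofReal (gumbelCDF (θ x) t) := by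
        simp_rw [← hcdf_shift]
        exact hshift.measure_iSup_le t
    _ = ENNReal.ofReal (gumbelCDF (log (∑ x : X, exp (θ x))) t) := by
        rw [← ENNReal.ofReal_prod_of_nonneg fun x _ ↦ (gumbelCDF_pos _ _).le,
          prod_gumbelCDF Finset.univ_nonempty]

/-- Let `X` be a finite nonempty set, `θ : X → ℝ`, and
`Z = ∑ x, exp (θ x)`.  If `γ x`, `x : X`, are independent random variables, each with the
zero-mean Gumbel distribution (cdf `t ↦ exp (-exp (-(t + c)))`, `c` the Euler–Mascheroni
constant), then `M = max_x (θ x + γ x)` is Gumbel distributed with location `log Z`: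
`P [M ≤ t] = exp (-exp (-(t - log Z + c)))` for every `t`. -/
theorem perturbed_max_gumbel_log_partition
    {X : Type*} [Fintype X] [Nonempty X] (θ : X → ℝ)
    {Ω : Type*} [MeasurableSpace Ω] (P : Measure Ω) [IsProbabilityMeasure P]
    (γ : X → Ω → ℝ) (hmeas : ∀ x, Measurable (γ x))
    (hindep : iIndepFun γ P)
    (hcdf : ∀ x t, P {ω | γ x ω ≤ t} =
      ENNReal.ofReal (exp (-exp (-(t + eulerMascheroniConstant))))) :
    ∀ t : ℝ,
      P {ω | (⨆ x : X, (θ x + γ x ω)) ≤ t} =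
        ENNReal.ofReal
          (exp (-exp (-(t - Real.log (∑ x : X, exp (θ x)) + eulerMascheroniConstant)))) :=
  perturbed_max_gumbel_log_partition_general θ P γ hindep hcdf
end

section
/- Let X = X_1 × ⋯ × X_n be a finite product space with each X_i a finite nonempty set. Let A be a finite family of subsets α ⊆ {1,…,n} covering {1,…,n}, whose pairwise intersections all equal β = ∩_{α∈A} α, and suppose θ(x) = Σ_{α∈A} θ_α(x_α) where each θ_α depends only on the coordinates x_α = (x_i)_{i∈α}. Then the partition function factorizes across the separator: Σ_{x∈X} exp(θ(x)) = Σ_{x_β} Π_{α∈A} ( Σ_{x_{α∖β}} exp(θ_α(x_α)) ), where the outer sum ranges over assignments to the coordinates in β and each inner sum ranges over assignments to the coordinates in α ∖ β with the β-coordinates fixed at x_β. -/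
/-!
Fix an assignment `b` to the separator `β`. Restricting a global configuration `x` with
`x|β = b` to each `α ∈ A` is a bijection onto families of local assignments agreeing with `b`
on `β`: it is injective because `A` covers the coordinates, and surjective because two distinct
members of `A` overlap only in `β`, where all local assignments equal `b`, so they glue.
Since `exp θ = ∏_α exp θα` and each factor only sees `x|α`, summing over the fibre of `b` is
therefore the expansion of a product of sums, and summing over `b` gives the claim.
-/

open Real Finset Function

section

variable {ι : Type*} {X : ι → Type*}

theorem exists_restrict_eq_of_compatible {A : Finset (Finset ι)}
    (hcover : ∀ i, ∃ α ∈ A, i ∈ α) (y : ∀ α : A, ∀ i : α.1, X i)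
    (hcompat : ∀ (α α' : A) (i : ι) (h : i ∈ α.1) (h' : i ∈ α'.1), y α ⟨i, h⟩ = y α' ⟨i, h'⟩) :
    ∃ x : ∀ i, X i, ∀ α : A, α.1.restrict x = y α := by
  choose α hαA hi using hcover
  exact ⟨fun i => y ⟨α i, hαA i⟩ ⟨i, hi i⟩, fun α' => funext fun i => hcompat _ _ _ _ _⟩

variable [DecidableEq ι] [∀ i, Nonempty (X i)] {A : Finset (Finset ι)} {β : Finset ι}

noncomputable def extendArbitrary (s : Finset ι) (y : ∀ i : s, X i) : ∀ i, X i :=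
  fun i => if h : i ∈ s then y ⟨i, h⟩ else Classical.arbitrary (X i)

theorem extendArbitrary_of_mem {s : Finset ι} (y : ∀ i : s, X i) {i : ι} (h : i ∈ s) :
    extendArbitrary s y i = y ⟨i, h⟩ :=
  dif_pos h

abbrev CompatibleAssignment (s t : Finset ι) (b : ∀ i : t, X i) :=
  {y : ∀ i : s, X i // ∀ i ∈ t, extendArbitrary s y i = extendArbitrary t b i}

theorem CompatibleAssignment.agree_of_separated
    (hsep : ∀ α ∈ A, ∀ α' ∈ A, α ≠ α' → α ∩ α' = β) {b : ∀ i : β, X i}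
    (y : ∀ α : A, CompatibleAssignment α.1 β b) (α α' : A) (i : ι) (h : i ∈ α.1)
    (h' : i ∈ α'.1) : (y α).1 ⟨i, h⟩ = (y α').1 ⟨i, h'⟩ := by
  obtain rfl | hne := eq_or_ne α α'
  · rfl
  have hiβ : i ∈ β := hsep α.1 α.2 α'.1 α'.2 (Subtype.coe_injective.ne hne) ▸ mem_inter.2 ⟨h, h'⟩
  have e := (y α).2 i hiβ
  have e' := (y α').2 i hiβ
  rw [extendArbitrary_of_mem _ h] at e
  rw [extendArbitrary_of_mem _ h'] at e'
  exact e.trans e'.symm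

def restrictToCompatible (hβ : ∀ α ∈ A, β ⊆ α) (b : ∀ i : β, X i)
    (x : {x : ∀ i, X i // β.restrict x = b}) (α : A) : CompatibleAssignment α.1 β b :=
  ⟨α.1.restrict x.1, fun i hi => by
    rw [extendArbitrary_of_mem _ (hβ α.1 α.2 hi), extendArbitrary_of_mem _ hi]
    exact congr_fun x.2 ⟨i, hi⟩⟩

theorem restrictToCompatible_bijective (hcover : ∀ i, ∃ α ∈ A, i ∈ α)
    (hβ : ∀ α ∈ A, β ⊆ α) (hsep : ∀ α ∈ A, ∀ α' ∈ A, α ≠ α' → α ∩ α' = β)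
    (b : ∀ i : β, X i) : Bijective (restrictToCompatible hβ b) := by
  constructor
  · intro x x' hxx'
    ext i
    obtain ⟨α, hα, hi⟩ := hcover i
    exact congr_fun (congr_arg Subtype.val (congr_fun hxx' ⟨α, hα⟩)) ⟨i, hi⟩
  · intro y
    obtain ⟨x, hx⟩ := exists_restrict_eq_of_compatible hcover (fun α => (y α).1)
      (CompatibleAssignment.agree_of_separated hsep y)
    refine ⟨⟨x, funext fun i => ?_⟩, funext fun α => Subtype.ext (hx α)⟩
    obtain ⟨α, hα, hiα⟩ := hcover i
    have e := (y ⟨α, hα⟩).2 i i.2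
    rwa [extendArbitrary_of_mem _ hiα, extendArbitrary_of_mem _ i.2, ← hx ⟨α, hα⟩] at e

theorem sum_fiber_prod_eq_prod_sum_compatible {R : Type*} [CommSemiring R] [Fintype ι]
    [∀ i, Fintype (X i)] [∀ i, DecidableEq (X i)] (hcover : ∀ i, ∃ α ∈ A, i ∈ α)
    (hβ : ∀ α ∈ A, β ⊆ α) (hsep : ∀ α ∈ A, ∀ α' ∈ A, α ≠ α' → α ∩ α' = β)
    (f : Finset ι → (∀ i, X i) → R) (hf : ∀ α ∈ A, DependsOn (f α) α) (b : ∀ i : β, X i) :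
    ∑ x : {x : ∀ i, X i // β.restrict x = b}, ∏ α ∈ A.attach, f α x =
      ∏ α ∈ A.attach, ∑ y : CompatibleAssignment α.1 β b, f α (extendArbitrary α y.1) := by
  rw [← univ_eq_attach, Fintype.prod_sum]
  refine Fintype.sum_bijective _ (restrictToCompatible_bijective hcover hβ hsep b) _ _
    fun x => prod_congr rfl fun α _ => hf α.1 α.2 fun i hi => ?_
  exact (extendArbitrary_of_mem (s := α.1) (α.1.restrict x.1) hi).symm

end

/-- Let `X = X₁ × ⋯ × Xₙ` be a finite product space and `A` a family of
subsets of the coordinates covering `{1,…,n}` whose pairwise intersections all equal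
`β = ∩_{α∈A} α`.  If `θ = ∑_{α∈A} θα` where each `θα` depends only on the coordinates in `α`,
then the partition function factorizes across the separator:
`∑_x exp (θ x) = ∑_{x_β} ∏_{α∈A} ∑_{x_{α∖β}} exp (θα x_α)`, where the outer sum ranges over
assignments to `β` and the inner sums over assignments to `α ∖ β` with the `β`-coordinates
fixed. -/
theorem partition_function_factorizes_across_separator
    {n : ℕ} (X : Fin n → Type*) [∀ i, Fintype (X i)] [∀ i, Nonempty (X i)]
    [∀ i, DecidableEq (X i)]
    (A : Finset (Finset (Fin n))) (β : Finset (Fin n))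
    (hcover : ∀ i : Fin n, ∃ α ∈ A, i ∈ α)
    (hβ : ∀ α ∈ A, β ⊆ α)
    (hsep : ∀ α ∈ A, ∀ α' ∈ A, α ≠ α' → α ∩ α' = β)
    (θα : Finset (Fin n) → (∀ i, X i) → ℝ)
    (hdep : ∀ α ∈ A, ∀ x y : ∀ i, X i, (∀ i ∈ α, x i = y i) → θα α x = θα α y) :
    ∑ x : ∀ i, X i, exp (∑ α ∈ A, θα α x) =
      ∑ b : ((i : β) → X i),
        ∏ α ∈ A.attach,
          ∑ y : {y : (i : (α.1 : Finset (Fin n))) → X i //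
              ∀ i ∈ β,
                (fun i => if h : i ∈ α.1 then y ⟨i, h⟩ else Classical.arbitrary (X i)) i =
                (fun i => if h : i ∈ β then b ⟨i, h⟩ else Classical.arbitrary (X i)) i},
            exp (θα α.1
              (fun i => if h : i ∈ α.1 then y.1 ⟨i, h⟩ else Classical.arbitrary (X i))) := by
  rw [← Fintype.sum_fiberwise (fun x : ∀ i, X i => β.restrict x)]
  refine Fintype.sum_congr _ _ fun b => ?_
  have hexp (x : ∀ i, X i) : exp (∑ α ∈ A, θα α x) = ∏ α ∈ A.attach, exp (θα α x) := by
    rw [exp_sum, prod_attach A fun α => exp (θα α x)]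
  simp only [hexp]
  rw [sum_fiber_prod_eq_prod_sum_compatible hcover hβ hsep (fun α x => exp (θα α x))
    (fun α hα x y h => congrArg exp (hdep α hα x y h)) b]
  -- The statement decides its subtypes through `Nat.decidableForallFin`, the lemma through
  -- `Fintype.decidableForallFintype`; the `Fintype` instances agree only up to `Subsingleton`.
  exact prod_congr rfl fun α _ => sum_congr (congrArg (@univ _) (Subsingleton.elim _ _)) fun _ _ => rfl
end
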